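/- Let d ≥ 2 and let the margin-based loss φ : ℝ → [0,∞) be bounded, continuous, non-increasing and quasi-concave even, and assume φ(−t) > φ(t) for every t with γ < t ≤ 1. Then φ is H_lin-calibrated with respect to the adversarial 0/1 loss ℓ_γ if and only if φ(γ) + φ(−γ) > φ(t) + φ(−t) for every t with γ < t ≤ 1. -/

import Mathlib

open scoped RealInnerProductSpace

noncomputable section

/-- A loss assigns a value to a predictor `f`, a point `x`, and a label `y` (±1). -/
abbrev Loss (d : ℕ) := ((EuclideanSpace ℝ (Fin d)) → ℝ) → (EuclideanSpace ℝ (Fin d)) → ℝ → ℝ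

variable {d : ℕ}

/-- The inner (conditional) ℓ-risk. -/
def innerRisk (ℓ : Loss d) (f : EuclideanSpace ℝ (Fin d) → ℝ)
    (x : EuclideanSpace ℝ (Fin d)) (η : ℝ) : ℝ :=
  η * ℓ f x 1 + (1 - η) * ℓ f x (-1)

/-- The minimal inner ℓ-risk over a hypothesis set `H`. -/
def minInnerRisk (ℓ : Loss d) (H : Set (EuclideanSpace ℝ (Fin d) → ℝ))
    (x : EuclideanSpace ℝ (Fin d)) (η : ℝ) : ℝ :=
  ⨅ f : H, innerRisk ℓ f x η

/-- ℓ₁ is H-calibrated with respect to ℓ₂. -/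
def Calibrated (H : Set (EuclideanSpace ℝ (Fin d) → ℝ)) (ℓ₁ ℓ₂ : Loss d) : Prop :=
  ∀ ε > (0:ℝ), ∀ η ∈ Set.Icc (0:ℝ) 1, ∀ x : EuclideanSpace ℝ (Fin d), ‖x‖ ≤ 1 →
    ∃ δ > (0:ℝ), ∀ f ∈ H,
      innerRisk ℓ₁ f x η < minInnerRisk ℓ₁ H x η + δ →
      innerRisk ℓ₂ f x η < minInnerRisk ℓ₂ H x η + ε

/-- The adversarial 0/1 loss with perturbation radius γ. -/
def advLoss (γ : ℝ) : Loss d := fun f x y =>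
  ⨆ x' : Metric.closedBall x γ, (if y * f ↑x' ≤ 0 then (1:ℝ) else 0)

/-- A margin-based loss viewed as a loss. -/
def marginLoss (φ : ℝ → ℝ) : Loss d := fun f x y => φ (y * f x)

/-- The supremum-based surrogate of a margin-based loss. -/
def supLoss (γ : ℝ) (φ : ℝ → ℝ) : Loss d := fun f x y =>
  ⨆ x' : Metric.closedBall x γ, φ (y * f ↑x')

/-- Infimum of f over the closed γ-ball around x. -/
def infBall (γ : ℝ) (f : EuclideanSpace ℝ (Fin d) → ℝ) (x : EuclideanSpace ℝ (Fin d)) : ℝ :=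
  ⨅ x' : Metric.closedBall x γ, f ↑x'

/-- Supremum of f over the closed γ-ball around x. -/
def supBall (γ : ℝ) (f : EuclideanSpace ℝ (Fin d) → ℝ) (x : EuclideanSpace ℝ (Fin d)) : ℝ :=
  ⨆ x' : Metric.closedBall x γ, f ↑x'

/-- x is a distinguishing point for H. -/
def Distinguishing (γ : ℝ) (H : Set (EuclideanSpace ℝ (Fin d) → ℝ))
    (x : EuclideanSpace ℝ (Fin d)) : Prop :=
  ‖x‖ ≤ 1 ∧ (∃ f ∈ H, 0 < infBall γ f x) ∧ (∃ g ∈ H, supBall γ g x < 0)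

/-- H is regular for adversarial calibration. -/
def RegularAdv (γ : ℝ) (H : Set (EuclideanSpace ℝ (Fin d) → ℝ)) : Prop :=
  ∃ x, Distinguishing γ H x

/-- H is symmetric. -/
def SymmetricH (H : Set (EuclideanSpace ℝ (Fin d) → ℝ)) : Prop :=
  ∀ f ∈ H, -f ∈ H

/-- Linear hypothesis set. -/
def Hlin (d : ℕ) : Set (EuclideanSpace ℝ (Fin d) → ℝ) :=
  { f | ∃ w : EuclideanSpace ℝ (Fin d), ‖w‖ = 1 ∧ f = fun x => (inner ℝ w x : ℝ) }

/-- Generalized linear hypothesis set. -/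
def Hg (d : ℕ) (g : ℝ → ℝ) (G : ℝ) : Set (EuclideanSpace ℝ (Fin d) → ℝ) :=
  { f | ∃ (w : EuclideanSpace ℝ (Fin d)) (b : ℝ), ‖w‖ = 1 ∧ |b| ≤ G ∧
      f = fun x => g (inner ℝ w x : ℝ) + b }

/-- ReLU-based hypothesis set. -/
def Hrelu (d : ℕ) (G : ℝ) : Set (EuclideanSpace ℝ (Fin d) → ℝ) :=
  Hg d (fun t => max t 0) G

/-- One-layer ReLU neural network hypothesis set. -/
def Hnn (d n : ℕ) (Λ W : ℝ) : Set (EuclideanSpace ℝ (Fin d) → ℝ) :=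
  { f | ∃ (u : Fin n → ℝ) (w : Fin n → EuclideanSpace ℝ (Fin d)),
      (∑ j, |u j|) ≤ Λ ∧ (∀ j, ‖w j‖ ≤ W) ∧
      f = fun x => ∑ j, u j * max (inner ℝ (w j) x : ℝ) 0 }

/-- All (Borel) measurable functions. -/
def Hall (d : ℕ) : Set (EuclideanSpace ℝ (Fin d) → ℝ) :=
  { f | Measurable f }

/-- The ρ-margin loss. -/
def phiRho (ρ t : ℝ) : ℝ := min 1 (max 0 (1 - t / ρ))


/-!
For a unit vector `w`, both inner risks of `x ↦ ⟪w, x⟫` at `x` depend only on the margin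
`u = ⟪w, x⟫`, which ranges over all of `[-‖x‖, ‖x‖]` because the unit sphere is connected when
`d ≥ 2`. The adversarial risk is `η` for `u < -γ`, `1` for `|u| ≤ γ` and `1 - η` for `u > γ`, so
calibration at `x` asks that φ-almost-optimal margins avoid the region where it is suboptimal.

If `φ t + φ (-t) < φ γ + φ (-γ)` on `(γ, 1]`, the margin `±‖x‖` beats that region strictly, hence
by compactness with a uniform gap `δ`. Conversely, if `φ γ + φ (-γ) ≤ φ t + φ (-t)` for such a `t`,
then at `η = 1/2` and `‖x‖ = t` the margin `γ` is φ-optimal, although its adversarial risk is `1`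
while the margin `t` achieves `1/2`.
-/

open Metric Set

section UnitVectors

variable {E : Type*} [NormedAddCommGroup E] [InnerProductSpace ℝ E]

lemma abs_inner_le_norm_of_norm_eq_one {w : E} (hw : ‖w‖ = 1) (x : E) : |⟪w, x⟫| ≤ ‖x‖ := by
  simpa [hw] using abs_real_inner_le_norm w x

lemma exists_norm_eq_one_inner_eq_norm [Nontrivial E] (x : E) :
    ∃ w : E, ‖w‖ = 1 ∧ ⟪w, x⟫ = ‖x‖ := by
  rcases eq_or_ne x 0 with rfl | hx
  · obtain ⟨w, hw⟩ := exists_norm_eq E zero_le_one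
    exact ⟨w, hw, by simp⟩
  · refine ⟨‖x‖⁻¹ • x, by simp [norm_smul, hx], ?_⟩
    rw [real_inner_smul_left, real_inner_self_eq_norm_sq]
    field_simp

/-- The unit sphere is connected when `dim E ≥ 2`, so `w ↦ ⟪w, x⟫` takes every value between its
extreme values `±‖x‖`. -/
lemma exists_norm_eq_one_inner_eq (hE : 1 < Module.rank ℝ E) {x : E} {u : ℝ} (hu : |u| ≤ ‖x‖) :
    ∃ w : E, ‖w‖ = 1 ∧ ⟪w, x⟫ = u := by
  have : Nontrivial E := (rank_pos_iff_nontrivial (R := ℝ)).1 (zero_lt_one.trans hE)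
  obtain ⟨w, hw, hwx⟩ := exists_norm_eq_one_inner_eq_norm x
  have himage : IsPreconnected ((fun v => ⟪v, x⟫) '' sphere (0 : E) 1) :=
    (isPreconnected_sphere hE 0 1).image _ (continuous_id.inner continuous_const).continuousOn
  obtain ⟨v, hv, rfl⟩ := himage.Icc_subset ⟨-w, by simpa using hw, by simp [hwx]⟩
    ⟨w, by simpa using hw, hwx⟩ (abs_le.mp hu)
  exact ⟨v, by simpa using hv, rfl⟩

lemma exists_mem_closedBall_inner_nonpos_iff {w : E} (hw : ‖w‖ = 1) {γ : ℝ} (hγ : 0 ≤ γ)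
    (x : E) : (∃ x' ∈ closedBall x γ, ⟪w, x'⟫ ≤ 0) ↔ ⟪w, x⟫ ≤ γ := by
  constructor
  · rintro ⟨x', hx', hle⟩
    have : ⟪w, x - x'⟫ ≤ γ := (real_inner_le_norm _ _).trans <| by
      rw [hw, one_mul, ← dist_eq_norm, dist_comm]; exact hx'
    rw [inner_sub_right] at this
    linarith
  · intro h
    refine ⟨x - γ • w, by simp [norm_smul, hw, abs_of_nonneg hγ], ?_⟩
    rw [inner_sub_right, real_inner_smul_right, real_inner_self_eq_norm_sq, hw]
    linarith

end UnitVectors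

lemma one_lt_rank_euclideanSpace (hd : 2 ≤ d) : 1 < Module.rank ℝ (EuclideanSpace ℝ (Fin d)) :=
  Module.one_lt_rank_of_one_lt_finrank (by rw [finrank_euclideanSpace_fin]; omega)

lemma QuasiconcaveOn.le_of_abs_le {g : ℝ → ℝ} (hg : QuasiconcaveOn ℝ univ g) (heven : g.Even)
    {r t : ℝ} (ht : |t| ≤ r) : g r ≤ g t :=
  ((hg (g r)).ordConnected.out ⟨trivial, (heven r).ge⟩ ⟨trivial, le_rfl⟩ (abs_le.mp ht)).2

open Classical in
lemma ciSup_ite_one_zero {ι : Sort*} [Nonempty ι] (p : ι → Prop) [DecidablePred p] :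
    (⨆ i, if p i then (1 : ℝ) else 0) = if ∃ i, p i then 1 else 0 := by
  have hle : ∀ j, (if p j then (1 : ℝ) else 0) ≤ 1 := fun j => by split_ifs <;> norm_num
  split_ifs with h
  · obtain ⟨i, hi⟩ := h
    exact le_antisymm (ciSup_le hle) (le_ciSup_of_le ⟨1, forall_mem_range.2 hle⟩ i (by simp [hi]))
  · simp [not_exists.mp h]

section InnerRisk

variable {ℓ : Loss d} {H : Set (EuclideanSpace ℝ (Fin d) → ℝ)} {x : EuclideanSpace ℝ (Fin d)}
  {η : ℝ}

lemma minInnerRisk_le_innerRisk (hℓ : ∀ f x y, 0 ≤ ℓ f x y) (hη : η ∈ Icc (0 : ℝ) 1)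
    {f : EuclideanSpace ℝ (Fin d) → ℝ} (hf : f ∈ H) :
    minInnerRisk ℓ H x η ≤ innerRisk ℓ f x η := by
  refine ciInf_le ⟨0, ?_⟩ (⟨f, hf⟩ : H)
  rintro _ ⟨g, rfl⟩
  exact add_nonneg (mul_nonneg hη.1 (hℓ _ _ _)) (mul_nonneg (sub_nonneg.2 hη.2) (hℓ _ _ _))

lemma le_minInnerRisk (hH : H.Nonempty) {c : ℝ} (h : ∀ f ∈ H, c ≤ innerRisk ℓ f x η) :
    c ≤ minInnerRisk ℓ H x η :=
  have := hH.to_subtype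
  le_ciInf fun f => h f f.2

end InnerRisk

lemma advLoss_nonneg (γ : ℝ) (f : EuclideanSpace ℝ (Fin d) → ℝ) (x : EuclideanSpace ℝ (Fin d))
    (y : ℝ) : 0 ≤ advLoss γ f x y :=
  Real.iSup_nonneg fun _ => by split_ifs <;> norm_num

def CalibratedAt (H : Set (EuclideanSpace ℝ (Fin d) → ℝ)) (ℓ₁ ℓ₂ : Loss d)
    (x : EuclideanSpace ℝ (Fin d)) (η ε : ℝ) : Prop :=
  ∃ δ > (0 : ℝ), ∀ f ∈ H,
    innerRisk ℓ₁ f x η < minInnerRisk ℓ₁ H x η + δ →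
    innerRisk ℓ₂ f x η < minInnerRisk ℓ₂ H x η + ε

def condMarginRisk (φ : ℝ → ℝ) (η u : ℝ) : ℝ := η * φ u + (1 - η) * φ (-u)

def condAdvRisk (γ η u : ℝ) : ℝ := (if u ≤ γ then η else 0) + (if -γ ≤ u then 1 - η else 0)

lemma innerRisk_marginLoss_inner (φ : ℝ → ℝ) (w x : EuclideanSpace ℝ (Fin d)) (η : ℝ) :
    innerRisk (marginLoss φ) (fun z => ⟪w, z⟫) x η = condMarginRisk φ η ⟪w, x⟫ := by
  simp [innerRisk, marginLoss, condMarginRisk]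

lemma innerRisk_advLoss_inner {γ : ℝ} (hγ : 0 ≤ γ) {w : EuclideanSpace ℝ (Fin d)} (hw : ‖w‖ = 1)
    (x : EuclideanSpace ℝ (Fin d)) (η : ℝ) :
    innerRisk (advLoss γ) (fun z => ⟪w, z⟫) x η = condAdvRisk γ η ⟪w, x⟫ := by
  have : Nonempty (closedBall x γ) := (nonempty_closedBall.2 hγ).to_subtype
  have hpos : advLoss γ (fun z => ⟪w, z⟫) x 1 = if ⟪w, x⟫ ≤ γ then 1 else 0 := by
    simp only [advLoss, one_mul]
    classical
    rw [ciSup_ite_one_zero]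
    refine if_congr ?_ rfl rfl
    simpa only [SetCoe.exists, exists_prop] using exists_mem_closedBall_inner_nonpos_iff hw hγ x
  have hneg : advLoss γ (fun z => ⟪w, z⟫) x (-1) = if -γ ≤ ⟪w, x⟫ then 1 else 0 := by
    have := exists_mem_closedBall_inner_nonpos_iff (w := -w) (by simpa using hw) hγ x
    simp only [advLoss, neg_one_mul]
    classical
    rw [ciSup_ite_one_zero]
    refine if_congr ?_ rfl rfl
    simpa only [SetCoe.exists, exists_prop, inner_neg_left, neg_le] using this
  simp only [innerRisk, condAdvRisk, hpos, hneg]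
  split_ifs <;> ring

section Profiles

variable {γ η u : ℝ}

lemma condAdvRisk_of_abs_le (hu : |u| ≤ γ) : condAdvRisk γ η u = 1 := by
  simp [condAdvRisk, (abs_le.mp hu).1, (abs_le.mp hu).2]

lemma condAdvRisk_of_lt (hγ : 0 ≤ γ) (hu : γ < u) : condAdvRisk γ η u = 1 - η := by
  simp [condAdvRisk, hu, (by linarith : -γ ≤ u)]

lemma condAdvRisk_of_lt_neg (hγ : 0 ≤ γ) (hu : u < -γ) : condAdvRisk γ η u = η := by
  simp [condAdvRisk, hu, (by linarith : u ≤ γ)]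

lemma min_le_condAdvRisk (hγ : 0 ≤ γ) (hη : η ∈ Icc (0 : ℝ) 1) (t : ℝ) :
    min η (1 - η) ≤ condAdvRisk γ η t := by
  rcases lt_or_ge γ t with hγt | htγ
  · exact (min_le_right _ _).trans (condAdvRisk_of_lt hγ hγt).ge
  rcases lt_or_ge t (-γ) with ht | hγt
  · exact (min_le_left _ _).trans (condAdvRisk_of_lt_neg hγ ht).ge
  · rw [condAdvRisk_of_abs_le (abs_le.mpr ⟨hγt, htγ⟩)]
    exact (min_le_left _ _).trans hη.2

lemma condMarginRisk_neg (φ : ℝ → ℝ) (η u : ℝ) :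
    condMarginRisk φ η (-u) = condMarginRisk φ (1 - η) u := by
  simp only [condMarginRisk, neg_neg]
  ring

lemma continuous_condMarginRisk {φ : ℝ → ℝ} (hφ : Continuous φ) (η : ℝ) :
    Continuous (condMarginRisk φ η) := by
  unfold condMarginRisk
  fun_prop

end Profiles

/-- Write `C_η(u) = S(u) / 2 + (η - 1/2) D(u)` with `S(u) = φ u + φ (-u)` and `D(u) = φ u - φ (-u)`:
`S` is even and decreasing in `|u|`, and `D` is antitone and negative on `(γ, 1]`. -/
lemma condMarginRisk_lt_of_le {φ : ℝ → ℝ} {γ : ℝ} (hanti : Antitone φ)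
    (hq : QuasiconcaveOn ℝ univ (fun t => φ t + φ (-t)))
    (hstrict : ∀ t : ℝ, γ < t → t ≤ 1 → φ t < φ (-t))
    (hsep : ∀ t : ℝ, γ < t → t ≤ 1 → φ t + φ (-t) < φ γ + φ (-γ)) {r : ℝ} (hr : γ < r)
    (hr1 : r ≤ 1) {η t : ℝ} (hη : 1 / 2 ≤ η) (ht : t ∈ Icc (-r) γ) (h : 1 / 2 < η ∨ -γ ≤ t) :
    condMarginRisk φ η r < condMarginRisk φ η t := by
  have heven : (fun t => φ t + φ (-t)).Even := fun t => by simp [add_comm]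
  have hsum : φ r + φ (-r) ≤ φ t + φ (-t) :=
    hq.le_of_abs_le heven (abs_le.mpr ⟨ht.1, ht.2.trans hr.le⟩)
  have hdiff : φ r - φ (-r) ≤ φ t - φ (-t) :=
    sub_le_sub (hanti (ht.2.trans hr.le)) (hanti (neg_le_neg (ht.2.trans hr.le)))
  have hdecomp : ∀ u, condMarginRisk φ η u = (φ u + φ (-u)) / 2 + (η - 1 / 2) * (φ u - φ (-u)) :=
    fun u => by unfold condMarginRisk; ring
  rw [hdecomp, hdecomp]
  rcases le_or_gt (-γ) t with hγt | htγ
  · have : φ r + φ (-r) < φ t + φ (-t) :=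
      (hsep r hr hr1).trans_le (hq.le_of_abs_le heven (abs_le.mpr ⟨hγt, ht.2⟩))
    nlinarith [mul_le_mul_of_nonneg_left hdiff (sub_nonneg.2 hη)]
  · have hη' : 1 / 2 < η := h.resolve_right htγ.not_ge
    have hr' := hstrict r hr hr1
    have ht' := hstrict (-t) (by linarith) (by linarith [ht.1])
    rw [neg_neg] at ht'
    nlinarith [mul_lt_mul_of_pos_left (by linarith : φ r - φ (-r) < φ t - φ (-t)) (sub_pos.2 hη')]

section Linear

variable {φ : ℝ → ℝ} {γ : ℝ} {η : ℝ} {x : EuclideanSpace ℝ (Fin d)} {ε : ℝ}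

/-- The required `δ` is the gap between the φ-risk at `u₀` and its minimum over `K`. -/
lemma calibratedAt_Hlin_of_gap (hd : 2 ≤ d) (hγ : 0 ≤ γ) (hφ0 : ∀ t, 0 ≤ φ t)
    (hcont : Continuous φ) (hη : η ∈ Icc (0 : ℝ) 1) {u₀ m : ℝ} {K : Set ℝ} (hu₀ : |u₀| ≤ ‖x‖)
    (hK : IsCompact K) (hgap : ∀ t ∈ K, condMarginRisk φ η u₀ < condMarginRisk φ η t)
    (hm : ∀ t, |t| ≤ ‖x‖ → m ≤ condAdvRisk γ η t)
    (hout : ∀ t, |t| ≤ ‖x‖ → t ∉ K → condAdvRisk γ η t ≤ m) (hε : 0 < ε) :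
    CalibratedAt (Hlin d) (marginLoss φ) (advLoss γ) x η ε := by
  obtain ⟨w₀, hw₀, hw₀x⟩ := exists_norm_eq_one_inner_eq (one_lt_rank_euclideanSpace hd) hu₀
  have hw₀H : (fun z => ⟪w₀, z⟫) ∈ Hlin d := ⟨w₀, hw₀, rfl⟩
  obtain ⟨c, hc, hcK⟩ := hK.exists_forall_le' (continuous_condMarginRisk hcont η).continuousOn hgap
  have hmargin : minInnerRisk (marginLoss φ) (Hlin d) x η ≤ condMarginRisk φ η u₀ := by
    simpa [innerRisk_marginLoss_inner, hw₀x] using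
      minInnerRisk_le_innerRisk (ℓ := marginLoss φ) (x := x) (fun _ _ _ => hφ0 _) hη hw₀H
  have hadv : m ≤ minInnerRisk (advLoss γ) (Hlin d) x η := by
    refine le_minInnerRisk ⟨_, hw₀H⟩ ?_
    rintro _ ⟨w, hw, rfl⟩
    rw [innerRisk_advLoss_inner hγ hw]
    exact hm _ (abs_inner_le_norm_of_norm_eq_one hw x)
  refine ⟨c - condMarginRisk φ η u₀, sub_pos.2 hc, ?_⟩
  rintro _ ⟨w, hw, rfl⟩ hrisk
  rw [innerRisk_marginLoss_inner] at hrisk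
  have hnotK : ⟪w, x⟫ ∉ K := fun hK => by linarith [hcK _ hK]
  rw [innerRisk_advLoss_inner hγ hw]
  linarith [hout _ (abs_inner_le_norm_of_norm_eq_one hw x) hnotK]

lemma calibratedAt_Hlin_of_norm_le (hd : 2 ≤ d) (hγ : 0 ≤ γ) (hφ0 : ∀ t, 0 ≤ φ t)
    (hcont : Continuous φ) (hη : η ∈ Icc (0 : ℝ) 1) (hxγ : ‖x‖ ≤ γ) (hε : 0 < ε) :
    CalibratedAt (Hlin d) (marginLoss φ) (advLoss γ) x η ε := by
  have hone t (ht : |t| ≤ ‖x‖) : condAdvRisk γ η t = 1 := condAdvRisk_of_abs_le (ht.trans hxγ)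
  exact calibratedAt_Hlin_of_gap hd hγ hφ0 hcont hη (u₀ := ‖x‖) (by simp) isCompact_empty
    (by simp) (fun t ht => (hone t ht).ge) (fun t ht _ => (hone t ht).le) hε

/-- The φ-optimal margin is `‖x‖` for `η ≥ 1/2` and `-‖x‖` for `η < 1/2`; `K` is the set of
margins where the adversarial risk is suboptimal. -/
lemma calibratedAt_Hlin_of_lt_norm (hd : 2 ≤ d) (hγ : 0 ≤ γ) (hφ0 : ∀ t, 0 ≤ φ t)
    (hcont : Continuous φ) (hanti : Antitone φ)
    (hq : QuasiconcaveOn ℝ univ (fun t => φ t + φ (-t)))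
    (hstrict : ∀ t : ℝ, γ < t → t ≤ 1 → φ t < φ (-t))
    (hsep : ∀ t : ℝ, γ < t → t ≤ 1 → φ t + φ (-t) < φ γ + φ (-γ))
    (hη : η ∈ Icc (0 : ℝ) 1) (hxγ : γ < ‖x‖) (hx : ‖x‖ ≤ 1) (hε : 0 < ε) :
    CalibratedAt (Hlin d) (marginLoss φ) (advLoss γ) x η ε := by
  have hmin t (_ : |t| ≤ ‖x‖) := min_le_condAdvRisk hγ hη t
  have hlt := @condMarginRisk_lt_of_le φ γ hanti hq hstrict hsep _ hxγ hx
  rcases lt_trichotomy η (1 / 2) with hη2 | rfl | hη2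
  · refine calibratedAt_Hlin_of_gap hd hγ hφ0 hcont hη (u₀ := -‖x‖) (by simp)
      (isCompact_Icc (a := -γ) (b := ‖x‖)) (fun t ht => ?_) hmin (fun t ht htK => ?_) hε
    · calc condMarginRisk φ η (-‖x‖) = condMarginRisk φ (1 - η) ‖x‖ := condMarginRisk_neg φ η _
        _ < condMarginRisk φ (1 - η) (-t) :=
          hlt (by linarith) ⟨by linarith [ht.2], by linarith [ht.1]⟩ (.inl (by linarith))
        _ = condMarginRisk φ η t := by rw [condMarginRisk_neg, sub_sub_cancel]
    · have htγ : t < -γ := not_le.1 fun h => htK ⟨h, (abs_le.mp ht).2⟩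
      rw [condAdvRisk_of_lt_neg hγ htγ]
      exact le_min le_rfl (by linarith)
  · refine calibratedAt_Hlin_of_gap hd hγ hφ0 hcont hη (u₀ := ‖x‖) (by simp)
      (isCompact_Icc (a := -γ) (b := γ))
      (fun t ht => hlt le_rfl ⟨by linarith [ht.1], ht.2⟩ (.inr ht.1)) hmin (fun t _ htK => ?_) hε
    rcases lt_or_ge γ t with hγt | htγ
    · rw [condAdvRisk_of_lt hγ hγt]; norm_num
    · rw [condAdvRisk_of_lt_neg hγ (not_le.1 fun h => htK ⟨h, htγ⟩)]; norm_num
  · refine calibratedAt_Hlin_of_gap hd hγ hφ0 hcont hη (u₀ := ‖x‖) (by simp)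
      (isCompact_Icc (a := -‖x‖) (b := γ)) (fun t ht => hlt hη2.le ht (.inl hη2)) hmin
      (fun t ht htK => ?_) hε
    rw [condAdvRisk_of_lt hγ (not_le.1 fun h => htK ⟨(abs_le.mp ht).1, h⟩)]
    exact le_min (by linarith) le_rfl

lemma lt_of_calibrated_Hlin (hd : 2 ≤ d) (hγ : 0 ≤ γ)
    (hq : QuasiconcaveOn ℝ univ (fun t => φ t + φ (-t)))
    (hcal : Calibrated (Hlin d) (marginLoss φ) (advLoss γ)) {t : ℝ} (hγt : γ < t) (ht : t ≤ 1) :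
    φ t + φ (-t) < φ γ + φ (-γ) := by
  by_contra! hle
  have hE := one_lt_rank_euclideanSpace hd
  have : Nontrivial (EuclideanSpace ℝ (Fin d)) := rank_pos_iff_nontrivial.1 (zero_lt_one.trans hE)
  have ht0 : 0 ≤ t := hγ.trans hγt.le
  obtain ⟨x, hx⟩ := exists_norm_eq (EuclideanSpace ℝ (Fin d)) ht0
  obtain ⟨δ, hδ, hcal⟩ := hcal (1 / 2) one_half_pos (1 / 2) ⟨by norm_num, by norm_num⟩ x (hx ▸ ht)
  obtain ⟨w₁, hw₁, hw₁x⟩ := exists_norm_eq_one_inner_eq hE (x := x) (u := γ)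
    (by rw [hx, abs_of_nonneg hγ]; exact hγt.le)
  obtain ⟨w₂, hw₂, hw₂x⟩ := exists_norm_eq_one_inner_eq hE (x := x) (u := t)
    (by rw [hx, abs_of_nonneg ht0])
  have hw₁H : (fun z => ⟪w₁, z⟫) ∈ Hlin d := ⟨w₁, hw₁, rfl⟩
  have heven : (fun t => φ t + φ (-t)).Even := fun t => by simp [add_comm]
  have hmargin : condMarginRisk φ (1 / 2) γ ≤ minInnerRisk (marginLoss φ) (Hlin d) x (1 / 2) := by
    refine le_minInnerRisk ⟨_, hw₁H⟩ ?_
    rintro _ ⟨w, hw, rfl⟩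
    have := hq.le_of_abs_le heven (hx ▸ abs_inner_le_norm_of_norm_eq_one hw x)
    simp only [innerRisk_marginLoss_inner, condMarginRisk] at this ⊢
    linarith
  have hadv := hcal _ hw₁H (by rw [innerRisk_marginLoss_inner, hw₁x]; linarith)
  have hmin_adv := minInnerRisk_le_innerRisk (advLoss_nonneg γ) (x := x) (η := 1 / 2)
    ⟨by norm_num, by norm_num⟩ (show (fun z => ⟪w₂, z⟫) ∈ Hlin d from ⟨w₂, hw₂, rfl⟩)
  rw [innerRisk_advLoss_inner hγ hw₁, hw₁x, condAdvRisk_of_abs_le (abs_of_nonneg hγ).le] at hadv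
  rw [innerRisk_advLoss_inner hγ hw₂, hw₂x, condAdvRisk_of_lt hγ hγt] at hmin_adv
  linarith

end Linear

theorem stmt9_general (d : ℕ) (hd : 2 ≤ d) (γ : ℝ) (hγ0 : 0 < γ)
    (φ : ℝ → ℝ) (hφ0 : ∀ t, 0 ≤ φ t)
    (hcont : Continuous φ) (hanti : Antitone φ)
    (hqce : QuasiconcaveOn ℝ Set.univ (fun t => φ t + φ (-t)))
    (hstrict : ∀ t : ℝ, γ < t → t ≤ 1 → φ t < φ (-t)) :
    Calibrated (Hlin d) (marginLoss φ) (advLoss γ) ↔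
      ∀ t : ℝ, γ < t → t ≤ 1 → φ t + φ (-t) < φ γ + φ (-γ) := by
  refine ⟨fun hcal _ => lt_of_calibrated_Hlin hd hγ0.le hqce hcal, fun hsep => ?_⟩
  intro ε hε η hη x hx
  rcases le_or_gt ‖x‖ γ with hxγ | hxγ
  · exact calibratedAt_Hlin_of_norm_le hd hγ0.le hφ0 hcont hη hxγ hε
  · exact calibratedAt_Hlin_of_lt_norm hd hγ0.le hφ0 hcont hanti hqce hstrict hsep hη hxγ hx hε

theorem stmt9 (d : ℕ) (hd : 2 ≤ d) (γ : ℝ) (hγ0 : 0 < γ) (hγ1 : γ < 1)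
    (φ : ℝ → ℝ) (hφ0 : ∀ t, 0 ≤ φ t) (hbdd : ∃ M, ∀ t, φ t ≤ M)
    (hcont : Continuous φ) (hanti : Antitone φ)
    (hqce : QuasiconcaveOn ℝ Set.univ (fun t => φ t + φ (-t)))
    (hstrict : ∀ t : ℝ, γ < t → t ≤ 1 → φ t < φ (-t)) :
    Calibrated (Hlin d) (marginLoss φ) (advLoss γ) ↔
      ∀ t : ℝ, γ < t → t ≤ 1 → φ t + φ (-t) < φ γ + φ (-γ) :=
  stmt9_general d hd γ hγ0 φ hφ0 hcont hanti hqce hstrict
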